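/- Let r ∈ (1, ∞), p ∈ (0, 1) and θ ∈ [0, ∞) be real numbers, and let f : 𝒜 → 𝒜 be a mapping satisfying f(r x) = r f(x) for all x ∈ 𝒜 and ‖r μ f((a+b)/r) + r μ f((a−b)/r) − 2 f(μ a) + f(c c* c) − f(c) c* c − c (f(c))* c − c c* f(c)‖ ≤ θ(‖a‖^p + ‖b‖^p + ‖c‖^p) for all μ ∈ 𝕋 and all a, b, c ∈ 𝒜. Then f is a J*-derivation on 𝒜. -/

import Mathlib

/-!
Replacing `(a, b, c)` by `(rⁿa, rⁿb, rⁿc)` multiplies the Jensen part of the defect by `rⁿ` and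
its derivation part by `r³ⁿ`, while the bound grows only like `(r^p)ⁿ` with `r^p < r`; hence both
parts vanish. The resulting Jensen equation `μ f(a + b) + μ f(a - b) = 2 f(μ a)` for `|μ| = 1`
makes `f` additive and `𝕋`-homogeneous, and `𝕋`-homogeneity of an additive map extends to all of
`ℂ` because every `z` with `|z| ≤ 2` is a sum of two numbers of modulus one.
-/

open ContinuousLinearMap Filter

variable {H K : Type*} [NormedAddCommGroup H] [InnerProductSpace ℂ H] [CompleteSpace H]
  [NormedAddCommGroup K] [InnerProductSpace ℂ K] [CompleteSpace K]

/-- `𝒜` is closed under the `J*`-triple product `x ↦ x x* x`. -/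
def JStarClosed (𝒜 : Submodule ℂ (H →L[ℂ] K)) : Prop :=
  ∀ x : H →L[ℂ] K, x ∈ 𝒜 → (x ∘L adjoint x) ∘L x ∈ 𝒜

/-- The triple product `c c* c` as an element of `𝒜`. -/
noncomputable def cube (𝒜 : Submodule ℂ (H →L[ℂ] K)) (hA : JStarClosed 𝒜) (c : 𝒜) : 𝒜 :=
  ⟨((c : H →L[ℂ] K) ∘L adjoint (c : H →L[ℂ] K)) ∘L (c : H →L[ℂ] K), hA c c.2⟩

/-- `D : 𝒜 → 𝒜` is a `J*`-derivation: it is `ℂ`-linear and satisfies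
`D(c c* c) = D(c) c* c + c (D(c))* c + c c* D(c)`. -/
noncomputable def IsJStarDerivation (𝒜 : Submodule ℂ (H →L[ℂ] K)) (hA : JStarClosed 𝒜)
    (D : 𝒜 → 𝒜) : Prop :=
  (∀ a b : 𝒜, D (a + b) = D a + D b) ∧
  (∀ (z : ℂ) (a : 𝒜), D (z • a) = z • D a) ∧
  (∀ c : 𝒜, (D (cube 𝒜 hA c) : H →L[ℂ] K) =
      ((D c : H →L[ℂ] K) ∘L adjoint (c : H →L[ℂ] K)) ∘L (c : H →L[ℂ] K) +
      ((c : H →L[ℂ] K) ∘L adjoint (D c : H →L[ℂ] K)) ∘L (c : H →L[ℂ] K) +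
      ((c : H →L[ℂ] K) ∘L adjoint (c : H →L[ℂ] K)) ∘L (D c : H →L[ℂ] K))

/-- The defect of the generalized Jensen functional equation combined with the
`J*`-derivation identity, for a map `f : 𝒜 → 𝒜`, parameter `r` and scalar `μ`. -/
noncomputable def jensenDefect (𝒜 : Submodule ℂ (H →L[ℂ] K)) (hA : JStarClosed 𝒜)
    (r : ℝ) (f : 𝒜 → 𝒜) (μ : ℂ) (a b c : 𝒜) : H →L[ℂ] K :=
  ((r : ℂ) * μ) • (f ((r : ℂ)⁻¹ • (a + b)) : H →L[ℂ] K) +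
  ((r : ℂ) * μ) • (f ((r : ℂ)⁻¹ • (a - b)) : H →L[ℂ] K) -
  (2 : ℂ) • (f (μ • a) : H →L[ℂ] K) +
  (f (cube 𝒜 hA c) : H →L[ℂ] K) -
  ((f c : H →L[ℂ] K) ∘L adjoint (c : H →L[ℂ] K)) ∘L (c : H →L[ℂ] K) -
  ((c : H →L[ℂ] K) ∘L adjoint (f c : H →L[ℂ] K)) ∘L (c : H →L[ℂ] K) -
  ((c : H →L[ℂ] K) ∘L adjoint (c : H →L[ℂ] K)) ∘L (f c : H →L[ℂ] K)

open Topology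

theorem le_zero_of_pow_mul_le {r s x A B : ℝ} (hr : 1 < r) (hs : 0 ≤ s) (hsr : s < r)
    (h : ∀ n : ℕ, r ^ n * x ≤ A * s ^ n + B) : x ≤ 0 := by
  have hr0 : 0 < r := by linarith
  have hbound : ∀ n : ℕ, x ≤ A * (s / r) ^ n + B * r⁻¹ ^ n := fun n =>
    calc x ≤ (A * s ^ n + B) / r ^ n := (le_div_iff₀' (pow_pos hr0 n)).2 (h n)
      _ = _ := by rw [div_pow, inv_pow]; field_simp
  have hlim : Tendsto (fun n : ℕ => A * (s / r) ^ n + B * r⁻¹ ^ n) atTop (𝓝 0) := by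
    have hq : s / r < 1 := (div_lt_one hr0).2 hsr
    have hr' : r⁻¹ < 1 := inv_lt_one_of_one_lt₀ hr
    simpa using ((tendsto_pow_atTop_nhds_zero_of_lt_one (by positivity) hq).const_mul A).add
      ((tendsto_pow_atTop_nhds_zero_of_lt_one (by positivity) hr').const_mul B)
  exact ge_of_tendsto' hlim hbound

open Complex in
theorem Complex.exists_norm_eq_one_add_eq_of_norm_le_two {z : ℂ} (hz : ‖z‖ ≤ 2) :
    ∃ μ ν : ℂ, ‖μ‖ = 1 ∧ ‖ν‖ = 1 ∧ μ + ν = z := by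
  set α := Real.arccos (‖z‖ / 2)
  refine ⟨exp ((arg z + α : ℝ) * I), exp ((arg z - α : ℝ) * I), norm_exp_ofReal_mul_I _,
    norm_exp_ofReal_mul_I _, ?_⟩
  have hcos : (2 * Real.cos α : ℂ) = ‖z‖ := by
    rw [Real.cos_arccos (by linarith [norm_nonneg z]) (by linarith)]; push_cast; ring
  calc _ = exp (arg z * I) * (2 * cos α) := by
        rw [two_cos, mul_add, ← exp_add, ← exp_add]; push_cast; ring_nf
    _ = z := by rw [← ofReal_cos, hcos, mul_comm, norm_mul_exp_arg_mul_I]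

theorem map_add_of_jensen {𝕜 M N : Type*} [Field 𝕜] [CharZero 𝕜] [AddCommGroup M] [Module 𝕜 M]
    [AddCommGroup N] [Module 𝕜 N] {f : M → N} (h0 : f 0 = 0)
    (h : ∀ a b, f (a + b) + f (a - b) = (2 : 𝕜) • f a) (a b : M) : f (a + b) = f a + f b := by
  have hdouble : ∀ a, f ((2 : 𝕜) • a) = (2 : 𝕜) • f a := fun a => by
    simpa [h0, two_smul] using h a a
  have key := h ((2 : 𝕜)⁻¹ • (a + b)) ((2 : 𝕜)⁻¹ • (a - b))
  rwa [← hdouble, smul_inv_smul₀ two_ne_zero, show (2 : 𝕜)⁻¹ • (a + b) + (2 : 𝕜)⁻¹ • (a - b) = a by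
    module, show (2 : 𝕜)⁻¹ • (a + b) - (2 : 𝕜)⁻¹ • (a - b) = b by module, eq_comm] at key

theorem AddMonoidHom.map_smul_of_map_unit_smul {M N : Type*} [AddCommGroup M] [Module ℂ M]
    [AddCommGroup N] [Module ℂ N] (f : M →+ N) (h : ∀ μ : ℂ, ‖μ‖ = 1 → ∀ a, f (μ • a) = μ • f a)
    (z : ℂ) (a : M) : f (z • a) = z • f a := by
  obtain ⟨n, hnz⟩ := exists_nat_gt (‖z‖ / 2)
  have hn : (0 : ℝ) < n := by linarith [norm_nonneg z]
  have hn0 : (n : ℂ) ≠ 0 := Nat.cast_ne_zero.2 (by exact_mod_cast hn.ne')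
  have hzn : ‖z / n‖ ≤ 2 := by rw [norm_div, Complex.norm_natCast, div_le_iff₀ hn]; linarith
  obtain ⟨μ, ν, hμ, hν, hsum⟩ := Complex.exists_norm_eq_one_add_eq_of_norm_le_two hzn
  have hz : z = (n : ℂ) * (μ + ν) := by rw [hsum, mul_div_cancel₀ _ hn0]
  rw [hz, mul_smul, mul_smul, Nat.cast_smul_eq_nsmul, Nat.cast_smul_eq_nsmul, map_nsmul,
    add_smul, add_smul, map_add, h μ hμ, h ν hν]

theorem Submodule.norm_pow_smul_rpow {E : Type*} [SeminormedAddCommGroup E] [NormedSpace ℂ E]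
    {S : Submodule ℂ E} {r : ℝ} (hr : 0 ≤ r) (p : ℝ) (n : ℕ) (x : S) :
    ‖((r ^ n : ℝ) : ℂ) • x‖ ^ p = (r ^ p) ^ n * ‖x‖ ^ p := by
  rw [Submodule.coe_norm, Submodule.coe_smul, norm_smul, Complex.norm_real,
    Real.norm_of_nonneg (by positivity), Submodule.norm_coe,
    Real.mul_rpow (by positivity) (norm_nonneg x), Real.rpow_pow_comm hr]

theorem map_zero_of_map_smul {𝕜 M N : Type*} [Field 𝕜] [AddCommGroup M] [Module 𝕜 M]
    [AddCommGroup N] [Module 𝕜 N] {f : M → N} {c : 𝕜} (hc : c ≠ 1)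
    (hf : ∀ x, f (c • x) = c • f x) : f 0 = 0 := by
  have h : (c - 1) • f 0 = 0 := by rw [sub_smul, one_smul, ← hf, smul_zero, sub_self]
  exact (smul_eq_zero.1 h).resolve_left (sub_ne_zero.2 hc)

theorem map_pow_smul {M α β : Type*} [Monoid M] [MulAction M α] [MulAction M β] {f : α → β}
    {c : M} (hf : ∀ x, f (c • x) = c • f x) (n : ℕ) (x : α) : f (c ^ n • x) = c ^ n • f x := by
  induction n generalizing x with
  | zero => simp
  | succ n ih => rw [pow_succ', mul_smul, mul_smul, hf, ih]

noncomputable def derivationDefect (𝒜 : Submodule ℂ (H →L[ℂ] K)) (hA : JStarClosed 𝒜)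
    (f : 𝒜 → 𝒜) (c : 𝒜) : H →L[ℂ] K :=
  (f (cube 𝒜 hA c) : H →L[ℂ] K) -
  ((f c : H →L[ℂ] K) ∘L adjoint (c : H →L[ℂ] K)) ∘L (c : H →L[ℂ] K) -
  ((c : H →L[ℂ] K) ∘L adjoint (f c : H →L[ℂ] K)) ∘L (c : H →L[ℂ] K) -
  ((c : H →L[ℂ] K) ∘L adjoint (c : H →L[ℂ] K)) ∘L (f c : H →L[ℂ] K)

section Defects

variable {𝒜 : Submodule ℂ (H →L[ℂ] K)} {hA : JStarClosed 𝒜} {f : 𝒜 → 𝒜}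

theorem cube_ofReal_smul (t : ℝ) (c : 𝒜) :
    cube 𝒜 hA ((t : ℂ) • c) = ((t : ℂ) ^ 3) • cube 𝒜 hA c := by
  apply Subtype.ext
  simp only [cube, SetLike.val_smul, map_smulₛₗ, Complex.conj_ofReal, smul_comp, comp_smul,
    smul_smul]
  ring_nf

theorem cube_zero : cube 𝒜 hA 0 = 0 := by
  simpa using cube_ofReal_smul (hA := hA) 0 0

theorem derivationDefect_ofReal_smul {t : ℝ} (hft : ∀ x, f ((t : ℂ) • x) = (t : ℂ) • f x)
    (c : 𝒜) :
    derivationDefect 𝒜 hA f ((t : ℂ) • c) = (t : ℂ) ^ 3 • derivationDefect 𝒜 hA f c := by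
  have hft3 : ∀ x, f ((t : ℂ) ^ 3 • x) = (t : ℂ) ^ 3 • f x := fun x => by
    simp only [pow_succ, pow_zero, one_mul, mul_smul, hft]
  simp only [derivationDefect, cube_ofReal_smul, hft, hft3, SetLike.val_smul, map_smulₛₗ,
    Complex.conj_ofReal, smul_comp, comp_smul, smul_smul]
  module

theorem jensenDefect_one_zero_zero {r : ℝ} (hf0 : f 0 = 0) (c : 𝒜) :
    jensenDefect 𝒜 hA r f 1 0 0 c = derivationDefect 𝒜 hA f c := by
  simp [jensenDefect, derivationDefect, hf0]

theorem jensenDefect_smul_smul_zero {r : ℝ} {t : ℂ} (hf0 : f 0 = 0)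
    (hft : ∀ x, f (t • x) = t • f x) (μ : ℂ) (a b : 𝒜) :
    jensenDefect 𝒜 hA r f μ (t • a) (t • b) 0 = t • jensenDefect 𝒜 hA r f μ a b 0 := by
  unfold jensenDefect
  rw [← smul_add t a b, ← smul_sub t a b, smul_comm _ t, smul_comm _ t, smul_comm μ t,
    hft, hft, hft]
  simp only [cube_zero, hf0, SetLike.val_smul, ZeroMemClass.coe_zero, comp_zero, map_zero,
    sub_zero]
  module

theorem jensen_of_jensenDefect_eq_zero {r : ℝ} (hr : r ≠ 0) (hf0 : f 0 = 0)
    (hfr : ∀ x, f ((r : ℂ) • x) = (r : ℂ) • f x) {μ : ℂ} {a b : 𝒜}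
    (h : jensenDefect 𝒜 hA r f μ a b 0 = 0) :
    μ • f (a + b) + μ • f (a - b) = (2 : ℂ) • f (μ • a) := by
  have hr' : (r : ℂ) ≠ 0 := Complex.ofReal_ne_zero.2 hr
  have hfinv : ∀ x, f ((r : ℂ)⁻¹ • x) = (r : ℂ)⁻¹ • f x := fun x => by
    rw [eq_inv_smul_iff₀ hr', ← hfr, smul_inv_smul₀ hr']
  apply Subtype.coe_injective
  simp only [jensenDefect, cube_zero, hf0, hfinv, SetLike.val_smul, ZeroMemClass.coe_zero,
    comp_zero, map_zero, sub_zero, add_zero, smul_smul] at h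
  rw [mul_comm (r : ℂ) μ, mul_inv_cancel_right₀ hr', sub_eq_zero] at h
  simpa using h

end Defects

section Superstability

variable {𝒜 : Submodule ℂ (H →L[ℂ] K)} {hA : JStarClosed 𝒜} {f : 𝒜 → 𝒜} {r p θ : ℝ}
  (hr : 1 < r) (hp1 : p < 1)
  (hfpow : ∀ (n : ℕ) (x : 𝒜), f (((r ^ n : ℝ) : ℂ) • x) = ((r ^ n : ℝ) : ℂ) • f x)
  (hineq : ∀ (μ : ℂ), ‖μ‖ = 1 → ∀ a b c : 𝒜,
    ‖jensenDefect 𝒜 hA r f μ a b c‖ ≤ θ * (‖a‖ ^ p + ‖b‖ ^ p + ‖c‖ ^ p))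
include hr hp1 hfpow hineq

theorem jensenDefect_zero_right_eq_zero (hf0 : f 0 = 0) {μ : ℂ} (hμ : ‖μ‖ = 1) (a b : 𝒜) :
    jensenDefect 𝒜 hA r f μ a b 0 = 0 := by
  refine norm_le_zero_iff.1 <| le_zero_of_pow_mul_le hr (Real.rpow_nonneg (by linarith) p)
    (Real.rpow_lt_self_of_one_lt hr hp1) (A := θ * (‖a‖ ^ p + ‖b‖ ^ p))
    (B := θ * ‖(0 : 𝒜)‖ ^ p) fun n => ?_
  have h := hineq μ hμ (((r ^ n : ℝ) : ℂ) • a) (((r ^ n : ℝ) : ℂ) • b) 0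
  rw [jensenDefect_smul_smul_zero hf0 (hfpow n), norm_smul, Complex.norm_real,
    Real.norm_of_nonneg (by positivity), Submodule.norm_pow_smul_rpow (by linarith),
    Submodule.norm_pow_smul_rpow (by linarith)] at h
  linarith

theorem derivationDefect_eq_zero (hf0 : f 0 = 0) (c : 𝒜) : derivationDefect 𝒜 hA f c = 0 := by
  have hrp : r ^ p < r ^ 3 := (Real.rpow_lt_self_of_one_lt hr hp1).trans
    (lt_self_pow₀ hr (by norm_num))
  refine norm_le_zero_iff.1 <| le_zero_of_pow_mul_le (one_lt_pow₀ hr (by norm_num))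
    (Real.rpow_nonneg (by linarith) p) hrp (A := θ * ‖c‖ ^ p)
    (B := θ * (‖(0 : 𝒜)‖ ^ p + ‖(0 : 𝒜)‖ ^ p)) fun n => ?_
  have h := hineq 1 norm_one 0 0 (((r ^ n : ℝ) : ℂ) • c)
  rw [jensenDefect_one_zero_zero hf0, derivationDefect_ofReal_smul (hfpow n), norm_smul,
    norm_pow, Complex.norm_real, Real.norm_of_nonneg (by positivity),
    Submodule.norm_pow_smul_rpow (by linarith), ← pow_mul] at h
  rw [← pow_mul, mul_comm 3 n]
  linarith

end Superstability

theorem superstability_JStarDerivation_power_general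
    (𝒜 : Submodule ℂ (H →L[ℂ] K))
    (hA : JStarClosed 𝒜)
    (r : ℝ) (hr : 1 < r)
    (p θ : ℝ) (hp1 : p < 1)
    (f : 𝒜 → 𝒜) (hfr : ∀ x : 𝒜, f ((r : ℂ) • x) = (r : ℂ) • f x)
    (hineq : ∀ (μ : ℂ), ‖μ‖ = 1 → ∀ a b c : 𝒜,
      ‖jensenDefect 𝒜 hA r f μ a b c‖ ≤ θ * (‖a‖ ^ p + ‖b‖ ^ p + ‖c‖ ^ p)) :
    IsJStarDerivation 𝒜 hA f := by
  have hf0 : f 0 = 0 := map_zero_of_map_smul (by exact_mod_cast hr.ne') hfr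
  have hfpow : ∀ (n : ℕ) (x : 𝒜), f (((r ^ n : ℝ) : ℂ) • x) = ((r ^ n : ℝ) : ℂ) • f x := by
    simpa only [Complex.ofReal_pow] using map_pow_smul hfr
  have hjensen : ∀ μ : ℂ, ‖μ‖ = 1 → ∀ a b : 𝒜,
      μ • f (a + b) + μ • f (a - b) = (2 : ℂ) • f (μ • a) := fun μ hμ a b =>
    jensen_of_jensenDefect_eq_zero (by linarith) hf0 hfr
      (jensenDefect_zero_right_eq_zero hr hp1 hfpow hineq hf0 hμ a b)
  have hadd : ∀ a b : 𝒜, f (a + b) = f a + f b :=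
    map_add_of_jensen (𝕜 := ℂ) hf0 (by simpa using hjensen 1 norm_one)
  have hunit : ∀ μ : ℂ, ‖μ‖ = 1 → ∀ a : 𝒜, f (μ • a) = μ • f a := fun μ hμ a => by
    have h := hjensen μ hμ a 0
    rw [add_zero, sub_zero, ← two_smul ℂ] at h
    exact smul_right_injective 𝒜 two_ne_zero h.symm
  refine ⟨hadd, (AddMonoidHom.mk' f hadd).map_smul_of_map_unit_smul hunit, fun c => ?_⟩
  have hc := derivationDefect_eq_zero hr hp1 hfpow hineq hf0 c
  simp only [derivationDefect, sub_sub, sub_eq_zero] at hc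
  rw [hc, add_assoc]

/-- Corollary 3.5 (superstability with power control): if `f(rx) = rf(x)` and the
Jensen/`J*` defect of `f` is bounded by `θ(‖a‖^p + ‖b‖^p + ‖c‖^p)` with `p ∈ (0,1)`,
then `f` is a `J*`-derivation. -/
theorem superstability_JStarDerivation_power
    (𝒜 : Submodule ℂ (H →L[ℂ] K)) (hclosed : IsClosed (𝒜 : Set (H →L[ℂ] K)))
    (hA : JStarClosed 𝒜)
    (r : ℝ) (hr : 1 < r)
    (p θ : ℝ) (hp0 : 0 < p) (hp1 : p < 1) (hθ : 0 ≤ θ)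
    (f : 𝒜 → 𝒜) (hfr : ∀ x : 𝒜, f ((r : ℂ) • x) = (r : ℂ) • f x)
    (hineq : ∀ (μ : ℂ), ‖μ‖ = 1 → ∀ a b c : 𝒜,
      ‖jensenDefect 𝒜 hA r f μ a b c‖ ≤ θ * (‖a‖ ^ p + ‖b‖ ^ p + ‖c‖ ^ p)) :
    IsJStarDerivation 𝒜 hA f :=
  superstability_JStarDerivation_power_general 𝒜 hA r hr p θ hp1 f hfr hineq
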